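/- Smooth regularizer gap bound: under the preceding context (R convex and L'-smooth, φ_k strongly convex and smooth), the local-global gap satisfies l_π(a) ≤ (1/p)∑_{k=1}^p (L'' /2)((L_k+L)/μ_k)² ‖a - w*‖² for all a, where L'' is a smoothness constant of P_k(·;a) (independent of a). In particular there exists a constant γ < ∞ with l_π(a) ≤ γ‖a-w*‖² for all a. -/

import Mathlib

/-!
With `P_k(w; a) = (φ_k + R)(w) + ⟪∇F(a) - ∇φ_k(a), w⟫`, the tilts `∇F(a) - ∇φ_k(a)` average to
zero because `F` is the average of the `φ_k`, so `F + R` is the average of the `P_k(·; a)` and the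
gap is the average of `P_k(w*; a) - min P_k(·; a)`. Stationarity of `w*` for `F + R` makes `w*` a
stationary point, hence the minimizer, of the convex `P_k(·; w*)`. Changing the tilt of a
`μ_k`-strongly convex function by `v` moves its minimizer by at most `‖v‖ / μ_k`, and the tilt is
`(L_k + L)`-Lipschitz in `a`, so `‖w* - w_k(a)‖ ≤ (L_k + L) / μ_k ‖a - w*‖`; the `L''`-smoothness
of `P_k(·; a)` at its minimizer turns this into the quadratic bound.
-/

open Set Filter Topology
open scoped RealInnerProductSpace

variable {E : Type*} [NormedAddCommGroup E] [InnerProductSpace ℝ E]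

section StrongConvexity

variable {s : Set E} {f : E → ℝ} {m : ℝ}

theorem StrongConvexOn.add_inner (hf : StrongConvexOn s m f) (v : E) :
    StrongConvexOn s m fun w => f w + ⟪v, w⟫ := by
  have h := hf.add (uniformConvexOn_zero.2 ((innerₛₗ ℝ v).convexOn hf.1))
  rwa [add_zero] at h

theorem StrongConvexOn.add_sq_norm_sub_le_of_isMinOn (hf : StrongConvexOn s m f) {x y : E}
    (hx : IsMinOn f s x) (hxs : x ∈ s) (hys : y ∈ s) :
    f x + m / 2 * ‖y - x‖ ^ 2 ≤ f y := by
  have hstep : ∀ t ∈ Ioo (0 : ℝ) 1, f x + (1 - t) * (m / 2 * ‖y - x‖ ^ 2) ≤ f y := by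
    rintro t ⟨ht0, ht1⟩
    have hconv := hf.2 hxs hys (sub_nonneg.2 ht1.le) ht0.le (sub_add_cancel 1 t)
    have hmin : f x ≤ f ((1 - t) • x + t • y) :=
      hx (hf.1 hxs hys (sub_nonneg.2 ht1.le) ht0.le (sub_add_cancel 1 t))
    rw [norm_sub_rev] at hconv
    simp only [smul_eq_mul] at hconv
    refine le_of_mul_le_mul_left ?_ ht0
    linarith
  have hlim : Tendsto (fun t : ℝ => f x + (1 - t) * (m / 2 * ‖y - x‖ ^ 2)) (𝓝[>] 0)
      (𝓝 (f x + m / 2 * ‖y - x‖ ^ 2)) :=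
    tendsto_nhdsWithin_of_tendsto_nhds <| Continuous.tendsto' (by fun_prop) 0 _ (by simp)
  exact le_of_tendsto hlim (eventually_of_mem (Ioo_mem_nhdsGT one_pos) hstep)

theorem StrongConvexOn.norm_sub_le_of_isMinOn_add_inner (hf : StrongConvexOn s m f) (hm : 0 < m)
    {u v x y : E} (hx : IsMinOn (fun w => f w + ⟪u, w⟫) s x)
    (hy : IsMinOn (fun w => f w + ⟪v, w⟫) s y) (hxs : x ∈ s) (hys : y ∈ s) :
    ‖x - y‖ ≤ ‖u - v‖ / m := by
  have hux := (hf.add_inner u).add_sq_norm_sub_le_of_isMinOn hx hxs hys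
  have hvy := (hf.add_inner v).add_sq_norm_sub_le_of_isMinOn hy hys hxs
  have hquad : m * ‖x - y‖ ^ 2 ≤ ‖u - v‖ * ‖x - y‖ := by
    have hcs := real_inner_le_norm (u - v) (y - x)
    rw [norm_sub_rev y x] at hux hcs
    simp only [inner_sub_left, inner_sub_right] at hcs
    linarith
  rw [le_div_iff₀ hm]
  rcases (norm_nonneg (x - y)).eq_or_lt with h | h
  · rw [← h, zero_mul]
    exact norm_nonneg _
  · nlinarith

end StrongConvexity

theorem average_add_inner_eq {ι : Type*} [Fintype ι] [Nonempty ι] {F R : E → ℝ}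
    {φ : ι → E → ℝ} {c : ι → E} (hF : ∀ w, F w = (1 / (Fintype.card ι : ℝ)) * ∑ k, φ k w)
    (hc : ∑ k, c k = 0) (w : E) :
    (1 / (Fintype.card ι : ℝ)) * ∑ k, (φ k w + R w + ⟪c k, w⟫) = F w + R w := by
  rw [Finset.sum_add_distrib, Finset.sum_add_distrib, ← sum_inner, hc, inner_zero_left,
    Finset.sum_const, Finset.card_univ, nsmul_eq_mul, hF w]
  field_simp
  ring

section Gradient

variable [CompleteSpace E] {f g : E → ℝ} {f' g' x : E}

theorem HasGradientAt.add (hf : HasGradientAt f f' x) (hg : HasGradientAt g g' x) :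
    HasGradientAt (fun y => f y + g y) (f' + g') x := by
  rw [hasGradientAt_iff_hasFDerivAt, map_add]
  exact hf.hasFDerivAt.add hg.hasFDerivAt

theorem HasGradientAt.sub (hf : HasGradientAt f f' x) (hg : HasGradientAt g g' x) :
    HasGradientAt (fun y => f y - g y) (f' - g') x := by
  rw [hasGradientAt_iff_hasFDerivAt, map_sub]
  exact hf.hasFDerivAt.sub hg.hasFDerivAt

theorem HasGradientAt.sum {ι : Type*} (t : Finset ι) {f : ι → E → ℝ} {f' : ι → E}
    (h : ∀ i ∈ t, HasGradientAt (f i) (f' i) x) :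
    HasGradientAt (fun y => ∑ i ∈ t, f i y) (∑ i ∈ t, f' i) x := by
  rw [hasGradientAt_iff_hasFDerivAt, map_sum]
  exact HasFDerivAt.fun_sum fun i hi => (h i hi).hasFDerivAt

theorem hasGradientAt_inner_right (v x : E) : HasGradientAt (fun w => ⟪v, w⟫) v x :=
  (InnerProductSpace.toDual ℝ E v).hasFDerivAt

theorem IsLocalMin.hasGradientAt_eq_zero (h : IsLocalMin f x) (hf : HasGradientAt f f' x) :
    f' = 0 :=
  (InnerProductSpace.toDual ℝ E).map_eq_zero_iff.1 (h.hasFDerivAt_eq_zero hf.hasFDerivAt)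

theorem ConvexOn.isMinOn_of_hasGradientAt_eq_zero (hf : ConvexOn ℝ univ f)
    (hx : HasGradientAt f 0 x) : IsMinOn f univ x := by
  intro y _
  have hline : ConvexOn ℝ univ (f ∘ AffineMap.lineMap (k := ℝ) x y) := hf.comp_affineMap _
  have hderiv : HasDerivAt (f ∘ AffineMap.lineMap (k := ℝ) x y) 0 0 := by
    have hfx : HasFDerivAt f (0 : StrongDual ℝ E) (AffineMap.lineMap (k := ℝ) x y (0 : ℝ)) := by
      simpa using hx.hasFDerivAt
    simpa using hfx.comp_hasDerivAt 0 AffineMap.hasDerivAt_lineMap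
  have := hline.isMinOn_of_rightDeriv_eq_zero (by simp)
    (hderiv.hasDerivWithinAt.derivWithin (uniqueDiffWithinAt_Ioi 0)) (mem_univ 1)
  simpa using this

theorem ConvexOn.isMinOn_add_inner_of_isMinOn_add {F φ R : E → ℝ} {gF gφ gR : E}
    (hconv : ConvexOn ℝ univ fun w => φ w + R w) (hmin : IsMinOn (fun w => F w + R w) univ x)
    (hF : HasGradientAt F gF x) (hφ : HasGradientAt φ gφ x) (hR : HasGradientAt R gR x) :
    IsMinOn (fun w => φ w + R w + ⟪gF - gφ, w⟫) univ x := by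
  have hstat : gF + gR = 0 := (hmin.isLocalMin univ_mem).hasGradientAt_eq_zero (hF.add hR)
  have hconv' : ConvexOn ℝ univ fun w => φ w + R w + ⟪gF - gφ, w⟫ :=
    hconv.add ((innerₛₗ ℝ (gF - gφ)).convexOn convex_univ)
  refine hconv'.isMinOn_of_hasGradientAt_eq_zero ?_
  convert (hφ.add hR).add (hasGradientAt_inner_right (gF - gφ) x) using 1
  rw [← hstat]
  abel

theorem sum_sub_eq_zero_of_eq_average {ι : Type*} [Fintype ι] {F : E → ℝ} {φ : ι → E → ℝ}
    {gF : E} {gφ : ι → E} (hF : ∀ w, F w = (1 / (Fintype.card ι : ℝ)) * ∑ k, φ k w)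
    (hFg : HasGradientAt F gF x) (hφg : ∀ k, HasGradientAt (φ k) (gφ k) x) :
    ∑ k, (gF - gφ k) = 0 := by
  have hzero : (fun w => ∑ k, (F w - φ k w)) = fun _ => 0 := by
    funext w
    rcases isEmpty_or_nonempty ι with hι | hι
    · simp
    · rw [Finset.sum_sub_distrib, hF w, Finset.sum_const, Finset.card_univ, nsmul_eq_mul]
      field_simp
      ring
  have h := HasGradientAt.sum Finset.univ fun k _ => hFg.sub (hφg k)
  rw [hzero] at h
  exact h.unique (hasGradientAt_const x 0)

end Gradient

theorem local_global_gap_smooth_reg_general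
    (d p : ℕ) (hp : 0 < p)
    (F R : EuclideanSpace ℝ (Fin d) → ℝ)
    (φ : Fin p → EuclideanSpace ℝ (Fin d) → ℝ)
    (gF gR : EuclideanSpace ℝ (Fin d) → EuclideanSpace ℝ (Fin d))
    (gφ : Fin p → EuclideanSpace ℝ (Fin d) → EuclideanSpace ℝ (Fin d))
    (μk Lk : Fin p → ℝ) (L L'' : ℝ)
    (hμk : ∀ k, 0 < μk k) (hL'' : 0 ≤ L'')
    (hFavg : ∀ w, F w = (1 / (p : ℝ)) * ∑ k, φ k w)
    (hFgrad : ∀ x, HasGradientAt F (gF x) x)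
    (hRgrad : ∀ x, HasGradientAt R (gR x) x)
    (hφgrad : ∀ k x, HasGradientAt (φ k) (gφ k x) x)
    (hsc : ∀ k, StrongConvexOn Set.univ (μk k) (fun w => φ k w + R w))
    (hφlip : ∀ k x y, ‖gφ k x - gφ k y‖ ≤ Lk k * ‖x - y‖)
    (hFlip : ∀ x y, ‖gF x - gF y‖ ≤ L * ‖x - y‖)
    (wstar : EuclideanSpace ℝ (Fin d))
    (hwstar : IsMinOn (fun w => F w + R w) Set.univ wstar)
    (Pk : Fin p → EuclideanSpace ℝ (Fin d) → EuclideanSpace ℝ (Fin d) → ℝ)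
    (hPk : ∀ k w a, Pk k w a = φ k w + inner ℝ (gF a - gφ k a) w + R w)
    (wk : Fin p → EuclideanSpace ℝ (Fin d) → EuclideanSpace ℝ (Fin d))
    (hwk : ∀ k a, IsMinOn (fun w => Pk k w a) Set.univ (wk k a))
    -- `L''`-smoothness of `P_k(·;a)` around its minimizer (independent of `a`)
    (hsmooth : ∀ k a w, Pk k w a ≤ Pk k (wk k a) a + L'' / 2 * ‖w - wk k a‖ ^ 2) :
    (∀ a, (F wstar + R wstar) - (1 / (p : ℝ)) * ∑ k, Pk k (wk k a) a
        ≤ ((1 / (p : ℝ)) * ∑ k, L'' / 2 * ((Lk k + L) / μk k) ^ 2) * ‖a - wstar‖ ^ 2) ∧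
    (∃ γ : ℝ, ∀ a, (F wstar + R wstar) - (1 / (p : ℝ)) * ∑ k, Pk k (wk k a) a
        ≤ γ * ‖a - wstar‖ ^ 2) := by
  suffices hbound : ∀ a, (F wstar + R wstar) - (1 / (p : ℝ)) * ∑ k, Pk k (wk k a) a
      ≤ ((1 / (p : ℝ)) * ∑ k, L'' / 2 * ((Lk k + L) / μk k) ^ 2) * ‖a - wstar‖ ^ 2 from
    ⟨hbound, _, hbound⟩
  have hP : ∀ k w a, Pk k w a = φ k w + R w + ⟪gF a - gφ k a, w⟫ := fun k w a => by
    rw [hPk]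
    ring
  simp only [hP] at hwk
  have := Fin.pos_iff_nonempty.1 hp
  have hFavg' : ∀ w, F w = (1 / (Fintype.card (Fin p) : ℝ)) * ∑ k, φ k w := by simpa using hFavg
  have hmin : ∀ k, IsMinOn (fun w => φ k w + R w + ⟪gF wstar - gφ k wstar, w⟫) univ wstar :=
    fun k => (strongConvexOn_zero.1 ((hsc k).mono (hμk k).le)).isMinOn_add_inner_of_isMinOn_add
      hwstar (hFgrad wstar) (hφgrad k wstar) (hRgrad wstar)
  have htilt : ∀ k a, ‖(gF wstar - gφ k wstar) - (gF a - gφ k a)‖ ≤ (Lk k + L) * ‖a - wstar‖ :=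
    fun k a => by
      rw [← norm_neg, neg_sub, sub_sub_sub_comm]
      linarith [norm_sub_le (gF a - gF wstar) (gφ k a - gφ k wstar), hFlip a wstar,
        hφlip k a wstar]
  have hdist : ∀ k a, ‖wstar - wk k a‖ ≤ (Lk k + L) / μk k * ‖a - wstar‖ := fun k a => by
    rw [div_mul_eq_mul_div]
    exact ((hsc k).norm_sub_le_of_isMinOn_add_inner (hμk k) (hmin k) (hwk k a) trivial
      trivial).trans (div_le_div_of_nonneg_right (htilt k a) (hμk k).le)
  have hgap : ∀ k a, Pk k wstar a - Pk k (wk k a) a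
      ≤ L'' / 2 * ((Lk k + L) / μk k) ^ 2 * ‖a - wstar‖ ^ 2 := fun k a => by
    have hsq := pow_le_pow_left₀ (norm_nonneg _) (hdist k a) 2
    have := mul_le_mul_of_nonneg_left hsq (by positivity : 0 ≤ L'' / 2)
    linarith [hsmooth k a wstar]
  have hval : ∀ a, (1 / (p : ℝ)) * ∑ k, Pk k wstar a = F wstar + R wstar := fun a => by
    simpa [hP] using average_add_inner_eq (R := R) hFavg'
      (sum_sub_eq_zero_of_eq_average hFavg' (hFgrad a) fun k => hφgrad k a) wstar
  intro a
  rw [← hval a, ← mul_sub, ← Finset.sum_sub_distrib, mul_assoc, Finset.sum_mul]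
  gcongr with k
  exact hgap k a

/-- Smooth regularizer gap bound: the local-global gap satisfies
`l_π(a) ≤ (1/p)∑ₖ (L''/2)((Lₖ+L)/μₖ)² ‖a - w*‖²`; in particular it is bounded
by `γ‖a - w*‖²` for some constant `γ`. -/
theorem local_global_gap_smooth_reg
    (d p : ℕ) (hp : 0 < p)
    (F R : EuclideanSpace ℝ (Fin d) → ℝ)
    (φ : Fin p → EuclideanSpace ℝ (Fin d) → ℝ)
    (gF gR : EuclideanSpace ℝ (Fin d) → EuclideanSpace ℝ (Fin d))
    (gφ : Fin p → EuclideanSpace ℝ (Fin d) → EuclideanSpace ℝ (Fin d))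
    (μk Lk : Fin p → ℝ) (L L' L'' : ℝ)
    (hμk : ∀ k, 0 < μk k) (hLk : ∀ k, 0 ≤ Lk k) (hL : 0 ≤ L) (hL'' : 0 ≤ L'')
    (hFavg : ∀ w, F w = (1 / (p : ℝ)) * ∑ k, φ k w)
    (hFgrad : ∀ x, HasGradientAt F (gF x) x)
    (hRgrad : ∀ x, HasGradientAt R (gR x) x)
    (hφgrad : ∀ k x, HasGradientAt (φ k) (gφ k x) x)
    (hRconv : ConvexOn ℝ Set.univ R)
    (hRlip : ∀ x y, ‖gR x - gR y‖ ≤ L' * ‖x - y‖)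
    (hsc : ∀ k, StrongConvexOn Set.univ (μk k) (fun w => φ k w + R w))
    (hφlip : ∀ k x y, ‖gφ k x - gφ k y‖ ≤ Lk k * ‖x - y‖)
    (hFlip : ∀ x y, ‖gF x - gF y‖ ≤ L * ‖x - y‖)
    (wstar : EuclideanSpace ℝ (Fin d))
    (hwstar : IsMinOn (fun w => F w + R w) Set.univ wstar)
    (Pk : Fin p → EuclideanSpace ℝ (Fin d) → EuclideanSpace ℝ (Fin d) → ℝ)
    (hPk : ∀ k w a, Pk k w a = φ k w + inner ℝ (gF a - gφ k a) w + R w)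
    (wk : Fin p → EuclideanSpace ℝ (Fin d) → EuclideanSpace ℝ (Fin d))
    (hwk : ∀ k a, IsMinOn (fun w => Pk k w a) Set.univ (wk k a))
    -- `L''`-smoothness of `P_k(·;a)` around its minimizer (independent of `a`)
    (hsmooth : ∀ k a w, Pk k w a ≤ Pk k (wk k a) a + L'' / 2 * ‖w - wk k a‖ ^ 2) :
    (∀ a, (F wstar + R wstar) - (1 / (p : ℝ)) * ∑ k, Pk k (wk k a) a
        ≤ ((1 / (p : ℝ)) * ∑ k, L'' / 2 * ((Lk k + L) / μk k) ^ 2) * ‖a - wstar‖ ^ 2) ∧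
    (∃ γ : ℝ, ∀ a, (F wstar + R wstar) - (1 / (p : ℝ)) * ∑ k, Pk k (wk k a) a
        ≤ γ * ‖a - wstar‖ ^ 2) :=
  local_global_gap_smooth_reg_general d p hp F R φ gF gR gφ μk Lk L L'' hμk hL'' hFavg hFgrad hRgrad
    hφgrad hsc hφlip hFlip wstar hwstar Pk hPk wk hwk hsmooth
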